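/- arXiv:1411.5582 — 5 statements merged into one kernel-verified Lean document; each statement's English description precedes it below -/
import Mathlib

section
/- With the notation above, ‖·‖_T is a norm on X, and on any norm-bounded subset B of X, a sequence (u_n) in B with limit u ∈ B satisfies: ‖u_n - u‖_T → 0 if and only if ‖u_n⁺ - u⁺‖ → 0 and ũ_n ⇀ ũ weakly in X̃. -/
open scoped RealInnerProductSpace
open Filter Topology

section Aux

variable {X : Type*} [NormedAddCommGroup X] [InnerProductSpace ℝ X]

private lemma summable_geo : Summable (fun k : ℕ => (2:ℝ)⁻¹ ^ (k + 1)) := by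
  simpa [pow_succ] using
    (summable_geometric_of_lt_one (r := (2:ℝ)⁻¹) (by norm_num) (by norm_num)).mul_right (2:ℝ)⁻¹

private lemma abs_inner_le {e : ℕ → X} (he : Orthonormal ℝ e) (w : X) (k : ℕ) :
    |⟪w, e k⟫| ≤ ‖w‖ := by
  have h1 : |⟪w, e k⟫| ≤ ‖w‖ * ‖e k‖ := abs_real_inner_le_norm w (e k)
  rwa [he.1 k, mul_one] at h1

private lemma summable_S (e : ℕ → X) (he : Orthonormal ℝ e) (w : X) :
    Summable (fun k : ℕ => (2:ℝ)⁻¹ ^ (k + 1) * |⟪w, e k⟫|) := by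
  refine Summable.of_nonneg_of_le (fun k => by positivity) (fun k => ?_)
    (summable_geo.mul_right ‖w‖)
  exact mul_le_mul_of_nonneg_left (abs_inner_le he w k) (by positivity)

private lemma S_nonneg (e : ℕ → X) (w : X) :
    0 ≤ ∑' k : ℕ, (2:ℝ)⁻¹ ^ (k + 1) * |⟪w, e k⟫| :=
  tsum_nonneg (fun k => by positivity)

private lemma term_le_S (e : ℕ → X) (he : Orthonormal ℝ e) (w : X) (k : ℕ) :
    (2:ℝ)⁻¹ ^ (k + 1) * |⟪w, e k⟫| ≤ ∑' k : ℕ, (2:ℝ)⁻¹ ^ (k + 1) * |⟪w, e k⟫| :=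
  Summable.le_tsum (summable_S e he w) k (fun j _ => by positivity)

private lemma S_add_le (e : ℕ → X) (he : Orthonormal ℝ e) (b d : X) :
    (∑' k : ℕ, (2:ℝ)⁻¹ ^ (k + 1) * |⟪b + d, e k⟫|) ≤
      (∑' k : ℕ, (2:ℝ)⁻¹ ^ (k + 1) * |⟪b, e k⟫|) +
      (∑' k : ℕ, (2:ℝ)⁻¹ ^ (k + 1) * |⟪d, e k⟫|) := by
  rw [← Summable.tsum_add (summable_S e he b) (summable_S e he d)]
  refine Summable.tsum_le_tsum (fun k => ?_) (summable_S e he _)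
    ((summable_S e he b).add (summable_S e he d))
  have h : |⟪b + d, e k⟫| ≤ |⟪b, e k⟫| + |⟪d, e k⟫| := by
    rw [inner_add_left]; exact abs_add_le _ _
  have hp : (0:ℝ) ≤ (2:ℝ)⁻¹ ^ (k + 1) := by positivity
  nlinarith [mul_le_mul_of_nonneg_left h hp]

private lemma norm_part_le {Xt : Submodule ℝ X} {up ut : X} (hup : up ∈ Xtᗮ) (hut : ut ∈ Xt) :
    ‖ut‖ ≤ ‖up + ut‖ := by
  have h0 : ⟪up, ut⟫ = 0 := by
    rw [real_inner_comm]
    exact (Submodule.mem_orthogonal Xt up).mp hup ut hut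
  have h := norm_add_sq_real up ut
  rw [h0] at h
  nlinarith [norm_nonneg (up + ut), norm_nonneg ut, sq_nonneg ‖up‖]

end Aux

/-- `‖·‖_T` is a norm on `X`, and on a norm-bounded set a sequence
converges in `‖·‖_T` iff the `X⁺`-parts converge in norm and the `X̃`-parts converge
weakly. -/
theorem stmt1 {X : Type*} [NormedAddCommGroup X] [InnerProductSpace ℝ X] [CompleteSpace X]
    (Xt : Submodule ℝ X) (e : ℕ → X) (he : Orthonormal ℝ e) (hmem : ∀ k, e k ∈ Xt)
    (htotal : Xt ≤ (Submodule.span ℝ (Set.range e)).topologicalClosure)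
    (hdecomp : ∀ u : X, ∃ up ∈ Xtᗮ, ∃ ut ∈ Xt, u = up + ut)
    (T : X → ℝ)
    (hT : ∀ up ut : X, up ∈ Xtᗮ → ut ∈ Xt →
      T (up + ut) = max ‖up‖ (∑' k : ℕ, (2:ℝ)⁻¹ ^ (k + 1) * |⟪ut, e k⟫|)) :
    -- `T` is a norm
    ((∀ u v : X, T (u + v) ≤ T u + T v) ∧
     (∀ (c : ℝ) (u : X), T (c • u) = |c| * T u) ∧
     (∀ u : X, T u = 0 ↔ u = 0)) ∧
    -- sequential characterization of `T`-convergence on bounded sets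
    (∀ (R : ℝ) (u : ℕ → X) (v : X)
       (up : ℕ → X) (ut : ℕ → X) (vp vt : X),
       (∀ n, ‖u n‖ ≤ R) → ‖v‖ ≤ R →
       (∀ n, up n ∈ Xtᗮ) → (∀ n, ut n ∈ Xt) → (∀ n, u n = up n + ut n) →
       vp ∈ Xtᗮ → vt ∈ Xt → v = vp + vt →
       (Tendsto (fun n => T (u n - v)) atTop (𝓝 0) ↔
         (Tendsto (fun n => ‖up n - vp‖) atTop (𝓝 0) ∧
          ∀ w ∈ Xt, Tendsto (fun n => ⟪ut n - vt, w⟫) atTop (𝓝 0)))) := by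
  constructor
  · refine ⟨?_, ?_, ?_⟩
    · -- triangle inequality
      intro u v
      obtain ⟨a, ha, b, hb, rfl⟩ := hdecomp u
      obtain ⟨c, hc, d, hd, rfl⟩ := hdecomp v
      have hsum_eq : (a + b) + (c + d) = (a + c) + (b + d) := by abel
      rw [hsum_eq, hT (a + c) (b + d) (add_mem ha hc) (add_mem hb hd), hT a b ha hb,
        hT c d hc hd]
      refine max_le ?_ ?_
      · exact le_trans (norm_add_le a c)
          (add_le_add (le_max_left _ _) (le_max_left _ _))
      · exact le_trans (S_add_le e he b d)
          (add_le_add (le_max_right _ _) (le_max_right _ _))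
    · -- homogeneity
      intro c u
      obtain ⟨a, ha, b, hb, rfl⟩ := hdecomp u
      rw [smul_add, hT (c • a) (c • b) (Submodule.smul_mem _ c ha) (Submodule.smul_mem _ c hb),
        hT a b ha hb]
      have hterm : ∀ k : ℕ, (2:ℝ)⁻¹ ^ (k + 1) * |⟪c • b, e k⟫| =
          |c| * ((2:ℝ)⁻¹ ^ (k + 1) * |⟪b, e k⟫|) := by
        intro k; rw [real_inner_smul_left, abs_mul]; ring
      have hts : (∑' k : ℕ, (2:ℝ)⁻¹ ^ (k + 1) * |⟪c • b, e k⟫|) =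
          |c| * ∑' k : ℕ, (2:ℝ)⁻¹ ^ (k + 1) * |⟪b, e k⟫| := by
        simp_rw [hterm]; exact tsum_mul_left
      rw [hts, norm_smul, Real.norm_eq_abs, mul_max_of_nonneg _ _ (abs_nonneg c)]
    · -- definiteness
      intro u
      constructor
      · intro h0
        obtain ⟨a, ha, b, hb, rfl⟩ := hdecomp u
        rw [hT a b ha hb] at h0
        have h1 : ‖a‖ ≤ 0 := by rw [← h0]; exact le_max_left _ _
        have ha0 : a = 0 := norm_le_zero_iff.mp h1
        have h2 : (∑' k : ℕ, (2:ℝ)⁻¹ ^ (k + 1) * |⟪b, e k⟫|) = 0 :=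
          le_antisymm (by rw [← h0]; exact le_max_right _ _) (S_nonneg e b)
        have hk : ∀ k, ⟪b, e k⟫ = 0 := by
          intro k
          have ht0 : (2:ℝ)⁻¹ ^ (k + 1) * |⟪b, e k⟫| = 0 :=
            le_antisymm ((term_le_S e he b k).trans_eq h2) (by positivity)
          have hp : ((2:ℝ)⁻¹ ^ (k + 1)) ≠ 0 := by positivity
          have := (mul_eq_zero.mp ht0).resolve_left hp
          exact abs_eq_zero.mp this
        have hspan : (↑(Submodule.span ℝ (Set.range e)) : Set X) ⊆ {x : X | ⟪b, x⟫ = 0} := by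
          intro w hw
          refine Submodule.span_induction (p := fun w _ => ⟪b, w⟫ = 0) ?_ ?_ ?_ ?_ hw
          · rintro x ⟨k, rfl⟩; exact hk k
          · exact inner_zero_right b
          · intro x y _ _ hx hy; rw [inner_add_right, hx, hy, add_zero]
          · intro r x _ hx; rw [real_inner_smul_right, hx, mul_zero]
        have hclosed : IsClosed {x : X | ⟪b, x⟫ = 0} :=
          isClosed_eq (Continuous.inner continuous_const continuous_id) continuous_const
        have hbmem : b ∈ closure (↑(Submodule.span ℝ (Set.range e)) : Set X) := htotal hb
        have hbb : ⟪b, b⟫ = 0 := closure_minimal hspan hclosed hbmem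
        have hb0 : b = 0 := inner_self_eq_zero.mp hbb
        rw [ha0, hb0, add_zero]
      · rintro rfl
        have h := hT 0 0 (zero_mem _) (zero_mem _)
        simpa using h
  · -- sequential characterization
    intro R u v up ut vp vt hRu hRv hup hut hu hvp hvt hv
    have hdp : ∀ n, up n - vp ∈ Xtᗮ := fun n => sub_mem (hup n) hvp
    have hdt : ∀ n, ut n - vt ∈ Xt := fun n => sub_mem (hut n) hvt
    have hTeq : ∀ n, T (u n - v) =
        max ‖up n - vp‖ (∑' k : ℕ, (2:ℝ)⁻¹ ^ (k + 1) * |⟪ut n - vt, e k⟫|) := by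
      intro n
      have h : u n - v = (up n - vp) + (ut n - vt) := by rw [hu n, hv]; abel
      rw [h, hT _ _ (hdp n) (hdt n)]
    have hR0 : 0 ≤ R := le_trans (norm_nonneg (u 0)) (hRu 0)
    have hbd : ∀ n, ‖ut n - vt‖ ≤ 2 * R := by
      intro n
      have h1 : ‖ut n‖ ≤ R := by
        have := norm_part_le (hup n) (hut n)
        rw [← hu n] at this
        exact this.trans (hRu n)
      have h2 : ‖vt‖ ≤ R := by
        have := norm_part_le hvp hvt
        rw [← hv] at this
        exact this.trans hRv
      calc ‖ut n - vt‖ ≤ ‖ut n‖ + ‖vt‖ := norm_sub_le _ _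
        _ ≤ 2 * R := by linarith
    constructor
    · intro h
      have hmax1 : Tendsto (fun n => ‖up n - vp‖) atTop (𝓝 0) := by
        refine squeeze_zero (fun n => norm_nonneg _) (fun n => ?_) h
        rw [hTeq n]; exact le_max_left _ _
      refine ⟨hmax1, ?_⟩
      have hmax2 : Tendsto
          (fun n => ∑' k : ℕ, (2:ℝ)⁻¹ ^ (k + 1) * |⟪ut n - vt, e k⟫|) atTop (𝓝 0) := by
        refine squeeze_zero (fun n => S_nonneg e _) (fun n => ?_) h
        rw [hTeq n]; exact le_max_right _ _
      have hcoord : ∀ k, Tendsto (fun n => ⟪ut n - vt, e k⟫) atTop (𝓝 0) := by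
        intro k
        have htend : Tendsto (fun n =>
            ((2:ℝ)⁻¹ ^ (k + 1))⁻¹ * ∑' j : ℕ, (2:ℝ)⁻¹ ^ (j + 1) * |⟪ut n - vt, e j⟫|)
            atTop (𝓝 0) := by
          simpa using hmax2.const_mul ((2:ℝ)⁻¹ ^ (k + 1))⁻¹
        refine squeeze_zero_norm (fun n => ?_) htend
        have hle := term_le_S e he (ut n - vt) k
        rw [Real.norm_eq_abs]
        calc |⟪ut n - vt, e k⟫|
            = ((2:ℝ)⁻¹ ^ (k + 1))⁻¹ * ((2:ℝ)⁻¹ ^ (k + 1) * |⟪ut n - vt, e k⟫|) := by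
              rw [← mul_assoc, inv_mul_cancel₀ (by positivity), one_mul]
          _ ≤ _ := mul_le_mul_of_nonneg_left hle (by positivity)
      have hspan : ∀ w ∈ Submodule.span ℝ (Set.range e),
          Tendsto (fun n => ⟪ut n - vt, w⟫) atTop (𝓝 0) := by
        intro w hw
        refine Submodule.span_induction
          (p := fun w _ => Tendsto (fun n => ⟪ut n - vt, w⟫) atTop (𝓝 0)) ?_ ?_ ?_ ?_ hw
        · rintro x ⟨k, rfl⟩; exact hcoord k
        · simpa using (tendsto_const_nhds : Tendsto (fun _ : ℕ => (0:ℝ)) atTop (𝓝 0))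
        · intro x y _ _ hx hy
          have := hx.add hy
          rw [add_zero] at this
          refine this.congr (fun n => ?_)
          rw [inner_add_right]
        · intro r x _ hx
          have := hx.const_mul r
          rw [mul_zero] at this
          refine this.congr (fun n => ?_)
          rw [real_inner_smul_right]
      intro w hw
      rw [Metric.tendsto_atTop]
      intro ε hε
      have hM : (0:ℝ) < 2 * R + 1 := by linarith
      have hwc : w ∈ closure (↑(Submodule.span ℝ (Set.range e)) : Set X) := htotal hw
      obtain ⟨w', hw'mem, hw'close⟩ :=
        Metric.mem_closure_iff.mp hwc (ε / (2 * (2 * R + 1))) (by positivity)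
      have h1 := hspan w' hw'mem
      rw [Metric.tendsto_atTop] at h1
      obtain ⟨N, hN⟩ := h1 (ε / 2) (by positivity)
      refine ⟨N, fun n hn => ?_⟩
      have hNn := hN n hn
      rw [Real.dist_eq, sub_zero] at hNn ⊢
      have hb1 : |⟪ut n - vt, w - w'⟫| ≤ (2 * R + 1) * (ε / (2 * (2 * R + 1))) := by
        calc |⟪ut n - vt, w - w'⟫| ≤ ‖ut n - vt‖ * ‖w - w'‖ := abs_real_inner_le_norm _ _
          _ ≤ (2 * R + 1) * (ε / (2 * (2 * R + 1))) := by
            refine mul_le_mul (by linarith [hbd n]) ?_ (norm_nonneg _) (by linarith)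
            rw [← dist_eq_norm]; exact hw'close.le
      have heq : (2 * R + 1) * (ε / (2 * (2 * R + 1))) = ε / 2 := by
        field_simp
      have htri : |⟪ut n - vt, w⟫| ≤ |⟪ut n - vt, w - w'⟫| + |⟪ut n - vt, w'⟫| := by
        have hsplit : ⟪ut n - vt, w - w'⟫ = ⟪ut n - vt, w⟫ - ⟪ut n - vt, w'⟫ :=
          inner_sub_right _ _ _
        calc |⟪ut n - vt, w⟫|
            = |(⟪ut n - vt, w⟫ - ⟪ut n - vt, w'⟫) + ⟪ut n - vt, w'⟫| := by ring_nf
          _ ≤ |⟪ut n - vt, w⟫ - ⟪ut n - vt, w'⟫| + |⟪ut n - vt, w'⟫| := abs_add_le _ _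
          _ = |⟪ut n - vt, w - w'⟫| + |⟪ut n - vt, w'⟫| := by rw [hsplit]
      rw [heq] at hb1
      linarith
    · rintro ⟨hp, hw⟩
      have hS : Tendsto
          (fun n => ∑' k : ℕ, (2:ℝ)⁻¹ ^ (k + 1) * |⟪ut n - vt, e k⟫|) atTop (𝓝 0) := by
        have hdom := tendsto_tsum_of_dominated_convergence (𝓕 := atTop)
          (f := fun (n : ℕ) (k : ℕ) => (2:ℝ)⁻¹ ^ (k + 1) * |⟪ut n - vt, e k⟫|)
          (g := fun _ : ℕ => (0:ℝ))
          (bound := fun k : ℕ => (2:ℝ)⁻¹ ^ (k + 1) * (2 * R))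
          (summable_geo.mul_right _) ?_ ?_
        · simpa using hdom
        · intro k
          have h := hw (e k) (hmem k)
          have habs := h.abs
          rw [abs_zero] at habs
          have := habs.const_mul ((2:ℝ)⁻¹ ^ (k + 1))
          rw [mul_zero] at this
          exact this
        · refine Filter.Eventually.of_forall (fun n k => ?_)
          rw [Real.norm_eq_abs, abs_of_nonneg (by positivity)]
          exact mul_le_mul_of_nonneg_left
            ((abs_inner_le he (ut n - vt) k).trans (hbd n)) (by positivity)
      have hfin := hp.max hS
      rw [max_self] at hfin
      refine hfin.congr (fun n => (hTeq n).symm)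
end

section
/- Let K = 1 and f : ℝᴺ × ℝ → ℝ be continuous in the second variable with f(x,u) = ∂_u F(x,u), F(x,0) = 0, f(x,u) = o(u) as |u| → 0, and suppose u ↦ f(x,u)/|u| is nondecreasing on (-∞,0) and on (0,∞). Then f(x,u)·u ≥ 2F(x,u) ≥ 0 for all u ∈ ℝ and a.e. x. -/
open Filter Topology

/-- For `K = 1`, (F3) together with the weak monotonicity condition
implies (F4): `f(x,u)·u ≥ 2F(x,u) ≥ 0`. -/
theorem stmt2 {N : ℕ}
    (F f : EuclideanSpace ℝ (Fin N) → ℝ → ℝ)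
    (hcont : ∀ x, Continuous (f x))
    (hderiv : ∀ x u, HasDerivAt (F x) (f x u) u)
    (hF0 : ∀ x, F x 0 = 0)
    (hsmall : ∀ x, Tendsto (fun u : ℝ => f x u / u) (𝓝[≠] 0) (𝓝 0))
    (hmono : ∀ x, ∀ s t : ℝ, ((s ≤ t ∧ t < 0) ∨ (0 < s ∧ s ≤ t)) →
      f x s / |s| ≤ f x t / |t|) :
    ∀ x u, 2 * F x u ≤ f x u * u ∧ 0 ≤ F x u := by
  intro x u
  have hint : ∀ a b : ℝ, IntervalIntegrable (f x) MeasureTheory.volume a b :=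
    fun a b => (hcont x).intervalIntegrable a b
  have hFrep : ∀ v : ℝ, F x v = ∫ t in (0:ℝ)..v, f x t := by
    intro v
    rw [intervalIntegral.integral_eq_sub_of_hasDerivAt (fun t _ => hderiv x t) (hint 0 v),
      hF0]
    ring
  have hf0 : f x 0 = 0 := by
    have h1 : Tendsto (f x) (𝓝[≠] (0:ℝ)) (𝓝 (f x 0)) :=
      ((hcont x).tendsto 0).mono_left nhdsWithin_le_nhds
    have h2 : Tendsto (f x) (𝓝[≠] (0:ℝ)) (𝓝 0) := by
      have hid : Tendsto (fun t : ℝ => t) (𝓝[≠] (0:ℝ)) (𝓝 0) :=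
        tendsto_id.mono_left nhdsWithin_le_nhds
      have := (hsmall x).mul hid
      simp only [zero_mul] at this
      refine this.congr' ?_
      filter_upwards [self_mem_nhdsWithin] with t ht
      exact div_mul_cancel₀ _ ht
    exact tendsto_nhds_unique h1 h2
  have hpos : ∀ s : ℝ, 0 < s → 0 ≤ f x s / s := by
    intro s hs
    have hlim : Tendsto (fun t : ℝ => f x t / t) (𝓝[>] (0:ℝ)) (𝓝 0) :=
      (hsmall x).mono_left (nhdsWithin_mono _ fun t ht => ne_of_gt ht)
    refine le_of_tendsto hlim ?_
    filter_upwards [Ioc_mem_nhdsGT_of_mem ⟨le_refl 0, hs⟩] with t ht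
    have h := hmono x t s (Or.inr ⟨ht.1, ht.2⟩)
    rwa [abs_of_pos ht.1, abs_of_pos hs] at h
  have hneg : ∀ s : ℝ, s < 0 → f x s / (-s) ≤ 0 := by
    intro s hs
    have hlim : Tendsto (fun t : ℝ => f x t / (-t)) (𝓝[<] (0:ℝ)) (𝓝 0) := by
      have h1 : Tendsto (fun t : ℝ => f x t / t) (𝓝[<] (0:ℝ)) (𝓝 0) :=
        (hsmall x).mono_left (nhdsWithin_mono _ fun t ht => ne_of_lt ht)
      have h2 := h1.neg
      simp only [neg_zero] at h2
      exact h2.congr fun t => by rw [div_neg]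
    refine ge_of_tendsto hlim ?_
    filter_upwards [Ico_mem_nhdsLT_of_mem ⟨hs, le_refl 0⟩] with t ht
    have h := hmono x s t (Or.inl ⟨ht.1, ht.2⟩)
    rwa [abs_of_neg hs, abs_of_neg ht.2] at h
  rcases lt_trichotomy u 0 with hu | hu | hu
  · -- u < 0
    have hFu : F x u = -∫ t in u..(0:ℝ), f x t := by
      rw [hFrep, intervalIntegral.integral_symm]
    have hfle : ∀ s ∈ Set.Icc u 0, f x s ≤ 0 := by
      intro s hs
      rcases eq_or_lt_of_le hs.2 with h | h
      · rw [h, hf0]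
      · have h1 := hneg s h
        have h2 : (0:ℝ) < -s := by linarith
        nlinarith [div_mul_cancel₀ (f x s) (ne_of_gt h2)]
    have hIle : (∫ t in u..(0:ℝ), f x t) ≤ 0 := by
      have h0 := intervalIntegral.integral_mono_on hu.le (hint u 0)
        (intervalIntegrable_const (c := (0:ℝ))) hfle
      simpa using h0
    have hpt : ∀ s ∈ Set.Icc u 0, (f x u / (-u)) * (-s) ≤ f x s := by
      intro s hs
      rcases eq_or_lt_of_le hs.2 with h | h
      · rw [h, hf0]; simp
      · have h1 := hmono x u s (Or.inl ⟨hs.1, h⟩)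
        rw [abs_of_neg hu, abs_of_neg h] at h1
        have h2 : (0:ℝ) < -s := by linarith
        have h3 := mul_le_mul_of_nonneg_right h1 (le_of_lt h2)
        rwa [div_mul_cancel₀ (f x s) (ne_of_gt h2)] at h3
    have hintg : IntervalIntegrable (fun t : ℝ => (f x u / (-u)) * (-t))
        MeasureTheory.volume u 0 :=
      (Continuous.intervalIntegrable (by continuity) u 0)
    have hmle : (∫ t in u..(0:ℝ), (f x u / (-u)) * (-t)) ≤ ∫ t in u..(0:ℝ), f x t :=
      intervalIntegral.integral_mono_on hu.le hintg (hint u 0) hpt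
    have hcalc : (∫ t in u..(0:ℝ), (f x u / (-u)) * (-t)) = -(f x u * u) / 2 := by
      rw [intervalIntegral.integral_const_mul]
      have h4 : (∫ t in u..(0:ℝ), -t) = u ^ 2 / 2 := by
        rw [intervalIntegral.integral_neg, integral_id]; ring
      rw [h4]
      have hu' : u ≠ 0 := ne_of_lt hu
      field_simp
    rw [hcalc] at hmle
    constructor
    · rw [hFu]; linarith
    · rw [hFu]; linarith
  · simp [hu, hF0]
  · -- u > 0
    have hFu : F x u = ∫ t in (0:ℝ)..u, f x t := hFrep u
    have hfge : ∀ s ∈ Set.Icc (0:ℝ) u, 0 ≤ f x s := by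
      intro s hs
      rcases eq_or_lt_of_le hs.1 with h | h
      · rw [← h, hf0]
      · have h1 := hpos s h
        nlinarith [div_mul_cancel₀ (f x s) (ne_of_gt h)]
    have hInn : 0 ≤ ∫ t in (0:ℝ)..u, f x t :=
      intervalIntegral.integral_nonneg hu.le hfge
    have hpt : ∀ s ∈ Set.Icc (0:ℝ) u, f x s ≤ (f x u / u) * s := by
      intro s hs
      rcases eq_or_lt_of_le hs.1 with h | h
      · rw [← h, hf0]; simp
      · have h1 := hmono x s u (Or.inr ⟨h, hs.2⟩)
        rw [abs_of_pos h, abs_of_pos hu] at h1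
        have h3 := mul_le_mul_of_nonneg_right h1 (le_of_lt h)
        rwa [div_mul_cancel₀ (f x s) (ne_of_gt h)] at h3
    have hintg : IntervalIntegrable (fun t : ℝ => (f x u / u) * t)
        MeasureTheory.volume 0 u :=
      (Continuous.intervalIntegrable (by continuity) 0 u)
    have hmle : (∫ t in (0:ℝ)..u, f x t) ≤ ∫ t in (0:ℝ)..u, (f x u / u) * t :=
      intervalIntegral.integral_mono_on hu.le (hint 0 u) hintg hpt
    have hcalc : (∫ t in (0:ℝ)..u, (f x u / u) * t) = f x u * u / 2 := by
      rw [intervalIntegral.integral_const_mul, integral_id]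
      have hu' : u ≠ 0 := ne_of_gt hu
      field_simp
      ring
    rw [hcalc] at hmle
    constructor
    · rw [hFu]; linarith
    · rw [hFu]; exact hInn
end

section
/- Suppose f = ∂_u F satisfies the inequality (*): f(x,u)·((t²−1)/2 · u + t v) + F(x,u) − F(x,t u + v) ≤ 0 for all u, v ∈ ℝᴷ, t ≥ 0. Then f satisfies (F6): whenever f(x,u)·v = f(x,v)·u > 0, one has F(x,u) − F(x,v) ≤ ((f(x,u)·u)² − (f(x,u)·v)²)/(2 f(x,u)·u). -/
open scoped RealInnerProductSpace

/-- The inequality (*) implies (F6). -/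
theorem stmt7 {N K : ℕ}
    (F : EuclideanSpace ℝ (Fin N) → EuclideanSpace ℝ (Fin K) → ℝ)
    (f : EuclideanSpace ℝ (Fin N) → EuclideanSpace ℝ (Fin K) → EuclideanSpace ℝ (Fin K))
    (hF0 : ∀ x, F x 0 = 0)
    (hstar : ∀ x u v, ∀ t : ℝ, 0 ≤ t →
      ⟪f x u, ((t ^ 2 - 1) / 2) • u + t • v⟫ + F x u - F x (t • u + v) ≤ 0) :
    ∀ x u v, ⟪f x u, v⟫ = ⟪f x v, u⟫ → 0 < ⟪f x u, v⟫ →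
      F x u - F x v ≤ (⟪f x u, u⟫ ^ 2 - ⟪f x u, v⟫ ^ 2) / (2 * ⟪f x u, u⟫) := by
  intro x u v hsym hb
  set a := ⟪f x u, u⟫ with ha
  set b := ⟪f x u, v⟫ with hbdef
  have key : ∀ t : ℝ, 0 ≤ t → F x u - F x v ≤ (t ^ 2 + 1) / 2 * a - t * b := by
    intro t ht
    have h := hstar x u (-(t • u) + v) t ht
    have e1 : t • u + (-(t • u) + v) = v := by abel
    rw [e1] at h
    have e2 : ⟪f x u, ((t ^ 2 - 1) / 2) • u + t • (-(t • u) + v)⟫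
        = (t ^ 2 - 1) / 2 * a + t * (-(t * a) + b) := by
      simp [inner_add_right, inner_smul_right, inner_neg_right, ha, hbdef]
      ring
    rw [e2] at h
    nlinarith [h]
  have hFnn : 0 ≤ F x u := by
    have h := hstar x 0 u 0 le_rfl
    simp [hF0] at h
    linarith
  have ha0 : 0 ≤ a := by
    have h := hstar x u 0 0 le_rfl
    have e : (((0:ℝ) ^ 2 - 1) / 2) • u + (0:ℝ) • (0 : EuclideanSpace ℝ (Fin K))
        = (-(1/2) : ℝ) • u := by module
    have e2 : (0:ℝ) • u + (0 : EuclideanSpace ℝ (Fin K)) = 0 := by simp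
    rw [e, e2, real_inner_smul_right, hF0] at h
    linarith
  have hapos : 0 < a := by
    rcases lt_or_eq_of_le ha0 with h | h
    · exact h
    · exfalso
      have ht : 0 ≤ (F x v - F x u + 1) / b := by
        have h1 := key 1 zero_le_one
        have : F x v - F x u + 1 ≥ 0 := by nlinarith
        positivity
      have h2 := key ((F x v - F x u + 1) / b) ht
      have hbne : b ≠ 0 := ne_of_gt hb
      rw [← h] at h2
      field_simp at h2
      nlinarith
  have hq : 0 ≤ b / a := by positivity
  have h := key (b / a) hq
  have heq : ((b / a) ^ 2 + 1) / 2 * a - (b / a) * b = (a ^ 2 - b ^ 2) / (2 * a) := by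
    field_simp
    ring
  linarith [heq ▸ h]
end

section
/- (Key pointwise inequality in Lemma 3.2.) Fix x and u ∈ ℝᴷ with u ≠ 0, v ∈ ℝᴷ, and define φ(t) := f(x,u)·((t²−1)/2 · u + t v) + F(x,u) − F(x,t u + v) for t ≥ 0. Assume (F4): f(x,w)·w ≥ 2F(x,w) ≥ 0 for all w; (F5): F(x,w)/|w|² → ∞ as |w| → ∞; (F6): if f(x,w)·z = f(x,z)·w > 0 then F(x,w) − F(x,z) ≤ ((f(x,w)·w)² − (f(x,w)·z)²)/(2 f(x,w)·w); and that F(x,·) is C¹ with gradient f(x,·). Then φ(t) ≤ 0 for all t ≥ 0. -/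
/-!
By (F4), `φ(0) ≤ 0`, and by (F5), `φ(t) → -∞`, so `φ` attains its maximum over `[0, ∞)` at some
`t₀`. If `t₀ > 0` then `φ'(t₀) = 0`, i.e. `f(u)·(t₀u + v) = f(t₀u + v)·u =: c`. For `c ≤ 0`, (F4)
gives `φ(t₀) ≤ -t₀² f(u)·u / 2`; for `c > 0`, (F6) at `w = u`, `z = t₀u + v` gives
`φ(t₀) ≤ -(t₀ f(u)·u - c)² / (2 f(u)·u)`.
-/

open scoped RealInnerProductSpace
open Filter Set Metric Bornology

theorem IsLocalMin.hasGradientAt_eq_zero {E : Type*} [NormedAddCommGroup E] [InnerProductSpace ℝ E]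
    [CompleteSpace E] {F : E → ℝ} {g u : E} (h : IsLocalMin F u) (hg : HasGradientAt F g u) :
    g = 0 :=
  (InnerProductSpace.toDual ℝ E).map_eq_zero_iff.1 (h.hasFDerivAt_eq_zero hg.hasFDerivAt)

theorem exists_isMaxOn_Ici_of_tendsto_atBot {α β : Type*} [LinearOrder α] [TopologicalSpace α]
    [CompactIccSpace α] [ClosedIciTopology α] [NoMinOrder α] [LinearOrder β] [TopologicalSpace β]
    [ClosedIciTopology β] {φ : α → β} {a : α} (hφ : ContinuousOn φ (Ici a))
    (hlim : Tendsto φ atTop atBot) : ∃ t ∈ Ici a, IsMaxOn φ (Ici a) t := by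
  refine hφ.exists_isMaxOn' isClosed_Ici self_mem_Ici ?_
  refine Eventually.filter_mono (inf_le_inf_right _ cocompact_le_atBot_atTop) ?_
  rw [inf_sup_right, (disjoint_atBot_principal_Ici a).eq_bot, bot_sup_eq]
  exact (hlim.eventually (eventually_le_atBot (φ a))).filter_mono inf_le_left

section Superquadratic

variable {E : Type*} [NormedAddCommGroup E] [NormedSpace ℝ E] {u : E}

theorem sub_norm_le_norm_smul_add {t : ℝ} (ht : 0 ≤ t) (u v : E) :
    t * ‖u‖ - ‖v‖ ≤ ‖t • u + v‖ := by
  simpa [norm_smul, Real.norm_of_nonneg ht] using norm_sub_norm_le (t • u) (-v)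

theorem tendsto_smul_add_cobounded (hu : u ≠ 0) (v : E) :
    Tendsto (fun t : ℝ => t • u + v) atTop (cobounded E) := by
  rw [← tendsto_norm_atTop_iff_cobounded]
  refine tendsto_atTop_mono' _ ?_ <| tendsto_atTop_add_const_right _ (-‖v‖) <|
    tendsto_id.atTop_mul_const (norm_pos_iff.2 hu)
  filter_upwards [eventually_ge_atTop 0] with t ht
  simpa [sub_eq_add_neg] using sub_norm_le_norm_smul_add ht u v

theorem eventually_mul_sq_le_apply_smul_add {F : E → ℝ}
    (hF : Tendsto (fun w => F w / ‖w‖ ^ 2) (cocompact E) atTop) (hu : u ≠ 0) (v : E) (C : ℝ) :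
    ∀ᶠ t in atTop, C * t ^ 2 ≤ F (t • u + v) := by
  have hu' : 0 < ‖u‖ := norm_pos_iff.2 hu
  let A := 4 * max C 0 / ‖u‖ ^ 2
  have hA : ∀ᶠ t in atTop, A ≤ F (t • u + v) / ‖t • u + v‖ ^ 2 :=
    ((hF.comp ((tendsto_smul_add_cobounded hu v).mono_right cobounded_le_cocompact)).eventually
      (eventually_ge_atTop A))
  filter_upwards [hA, eventually_gt_atTop (2 * ‖v‖ / ‖u‖)] with t hAt ht
  have ht0 : 0 ≤ t := le_trans (by positivity) ht.le
  rw [div_lt_iff₀ hu'] at ht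
  have hnorm : t * ‖u‖ / 2 ≤ ‖t • u + v‖ := by linarith [sub_norm_le_norm_smul_add ht0 u v]
  have hpos : 0 < ‖t • u + v‖ := by nlinarith [norm_nonneg v]
  rw [le_div_iff₀ (by positivity)] at hAt
  calc C * t ^ 2 ≤ max C 0 * t ^ 2 := by gcongr; exact le_max_left _ _
    _ = A * (t * ‖u‖ / 2) ^ 2 := by simp only [A]; field_simp; ring
    _ ≤ A * ‖t • u + v‖ ^ 2 := by gcongr
    _ ≤ F (t • u + v) := hAt

end Superquadratic

section Gap

variable {E : Type*} [NormedAddCommGroup E] [InnerProductSpace ℝ E]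
  {F : E → ℝ} {f : E → E} {u v : E}

/-- The function `φ` of Lemma 3.2. -/
noncomputable def nehariGap (F : E → ℝ) (f : E → E) (u v : E) (t : ℝ) : ℝ :=
  ⟪f u, ((t ^ 2 - 1) / 2) • u + t • v⟫ + F u - F (t • u + v)

theorem nehariGap_apply (t : ℝ) :
    nehariGap F f u v t = (t ^ 2 - 1) / 2 * ⟪f u, u⟫ + t * ⟪f u, v⟫ + F u - F (t • u + v) := by
  rw [nehariGap, inner_add_right, real_inner_smul_right, real_inner_smul_right]

theorem hasDerivAt_comp_smul_add [CompleteSpace E] (hgrad : ∀ w, HasGradientAt F (f w) w)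
    (u v : E) (t : ℝ) :
    HasDerivAt (fun s : ℝ => F (s • u + v)) ⟪f (t • u + v), u⟫ t := by
  have hline : HasDerivAt (fun s : ℝ => s • u + v) u t := by
    simpa using ((hasDerivAt_id t).smul_const u).add_const v
  have := (hgrad (t • u + v)).hasFDerivAt.comp_hasDerivAt t hline
  simp only [InnerProductSpace.toDual_apply_apply] at this
  exact this

theorem hasDerivAt_nehariGap [CompleteSpace E] (hgrad : ∀ w, HasGradientAt F (f w) w)
    (u v : E) (t : ℝ) :
    HasDerivAt (nehariGap F f u v) (⟪f u, t • u + v⟫ - ⟪f (t • u + v), u⟫) t := by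
  have hpoly : HasDerivAt (fun s : ℝ => (s ^ 2 - 1) / 2 * ⟪f u, u⟫ + s * ⟪f u, v⟫ + F u)
      (t * ⟪f u, u⟫ + ⟪f u, v⟫) t :=
    ((((((hasDerivAt_pow 2 t).sub_const 1).div_const 2).mul_const ⟪f u, u⟫).add
      ((hasDerivAt_id t).mul_const ⟪f u, v⟫)).add_const (F u)).congr_deriv (by push_cast; ring)
  rw [funext nehariGap_apply, inner_add_right, real_inner_smul_right]
  exact hpoly.sub (hasDerivAt_comp_smul_add hgrad u v t)

theorem nehariGap_zero_nonpos (hFu : 2 * F u ≤ ⟪f u, u⟫) (hFv : 0 ≤ F v) :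
    nehariGap F f u v 0 ≤ 0 := by
  rw [nehariGap_apply, zero_smul, zero_add]
  linarith

theorem tendsto_nehariGap_atBot (hF : Tendsto (fun w => F w / ‖w‖ ^ 2) (cocompact E) atTop)
    (hu : u ≠ 0) : Tendsto (nehariGap F f u v) atTop atBot := by
  set a := ⟪f u, u⟫
  set b := ⟪f u, v⟫
  have hquad : Tendsto (fun t : ℝ => F u - a / 2 - t * (t - b)) atTop atBot :=
    tendsto_atBot_add_const_left _ _ <| tendsto_neg_atTop_atBot.comp <|
      tendsto_id.atTop_mul_atTop₀ (tendsto_atTop_add_const_right _ (-b) tendsto_id)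
  refine tendsto_atBot_mono' _ ?_ hquad
  filter_upwards [eventually_mul_sq_le_apply_smul_add hF hu v (a / 2 + 1)] with t ht
  rw [nehariGap_apply]
  linarith

theorem inner_self_pos_of_inner_pos [CompleteSpace E] (hgrad : HasGradientAt F (f u) u)
    (hF_nonneg : ∀ w, 0 ≤ F w) (hFu : 2 * F u ≤ ⟪f u, u⟫) {z : E} (hz : 0 < ⟪f u, z⟫) :
    0 < ⟪f u, u⟫ := by
  by_contra! ha
  have hmin : IsLocalMin F u :=
    Eventually.of_forall fun w => by linarith [hF_nonneg w]
  rw [hmin.hasGradientAt_eq_zero hgrad, inner_zero_left] at hz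
  exact hz.false

theorem nehariGap_nonpos_of_critical [CompleteSpace E] (hgrad : HasGradientAt F (f u) u)
    (hF4 : ∀ w, 2 * F w ≤ ⟪f w, w⟫ ∧ 0 ≤ F w)
    (hF6 : ∀ w z, ⟪f w, z⟫ = ⟪f z, w⟫ → 0 < ⟪f w, z⟫ →
      F w - F z ≤ (⟪f w, w⟫ ^ 2 - ⟪f w, z⟫ ^ 2) / (2 * ⟪f w, w⟫))
    {t : ℝ} (ht : 0 ≤ t) (hcrit : ⟪f u, t • u + v⟫ = ⟪f (t • u + v), u⟫) :
    nehariGap F f u v t ≤ 0 := by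
  set z := t • u + v
  set a := ⟪f u, u⟫
  set c := ⟪f u, z⟫
  have hb : ⟪f u, v⟫ = c - t * a := by
    simp only [c, z, inner_add_right, real_inner_smul_right]
    ring
  rw [nehariGap_apply, hb]
  rcases le_or_gt c 0 with hc | hc
  · have ha : 0 ≤ a := by linarith [hF4 u]
    linarith [(hF4 u).1, (hF4 z).2, mul_nonneg (sq_nonneg t) ha,
      mul_nonpos_of_nonneg_of_nonpos ht hc]
  · have ha : 0 < a := inner_self_pos_of_inner_pos hgrad (fun w => (hF4 w).2) (hF4 u).1 hc
    calc (t ^ 2 - 1) / 2 * a + t * (c - t * a) + F u - F z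
        = (F u - F z - (a ^ 2 - c ^ 2) / (2 * a)) - (t * a - c) ^ 2 / (2 * a) := by
          field_simp
          ring
      _ ≤ 0 := by
          have := hF6 u z hcrit hc
          have : 0 ≤ (t * a - c) ^ 2 / (2 * a) := by positivity
          linarith

end Gap

theorem stmt12_general {K : ℕ}
    (F : EuclideanSpace ℝ (Fin K) → ℝ)
    (f : EuclideanSpace ℝ (Fin K) → EuclideanSpace ℝ (Fin K))
    (hgrad : ∀ w, HasGradientAt F (f w) w)
    (hF4 : ∀ w, 2 * F w ≤ ⟪f w, w⟫ ∧ 0 ≤ F w)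
    (hF5 : Tendsto (fun w : EuclideanSpace ℝ (Fin K) => F w / ‖w‖ ^ 2)
      (cocompact (EuclideanSpace ℝ (Fin K))) atTop)
    (hF6 : ∀ w z, ⟪f w, z⟫ = ⟪f z, w⟫ → 0 < ⟪f w, z⟫ →
      F w - F z ≤ (⟪f w, w⟫ ^ 2 - ⟪f w, z⟫ ^ 2) / (2 * ⟪f w, w⟫))
    (u v : EuclideanSpace ℝ (Fin K)) (hu : u ≠ 0) :
    ∀ t : ℝ, 0 ≤ t →
      ⟪f u, ((t ^ 2 - 1) / 2) • u + t • v⟫ + F u - F (t • u + v) ≤ 0 := by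
  have hderiv := hasDerivAt_nehariGap hgrad u v
  obtain ⟨t₀, ht₀, hmax⟩ := exists_isMaxOn_Ici_of_tendsto_atBot
    (fun t _ => (hderiv t).continuousAt.continuousWithinAt) (tendsto_nehariGap_atBot hF5 hu)
  intro t ht
  refine (hmax ht).trans ?_
  rcases (mem_Ici.1 ht₀).eq_or_lt with rfl | hpos
  · exact nehariGap_zero_nonpos (hF4 u).1 (hF4 v).2
  · have hcrit := (hmax.isLocalMax (Ici_mem_nhds hpos)).hasDerivAt_eq_zero (hderiv t₀)
    exact nehariGap_nonpos_of_critical (hgrad u) hF4 hF6 hpos.le (sub_eq_zero.1 hcrit)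

/-- key pointwise inequality of Lemma 3.2: under (F4), (F5), (F6),
for `u ≠ 0` and any `v`, `φ(t) ≤ 0` for all `t ≥ 0`. -/
theorem stmt12 {K : ℕ}
    (F : EuclideanSpace ℝ (Fin K) → ℝ)
    (f : EuclideanSpace ℝ (Fin K) → EuclideanSpace ℝ (Fin K))
    (hgrad : ∀ w, HasGradientAt F (f w) w) (hfcont : Continuous f)
    (hF4 : ∀ w, 2 * F w ≤ ⟪f w, w⟫ ∧ 0 ≤ F w)
    (hF5 : Tendsto (fun w : EuclideanSpace ℝ (Fin K) => F w / ‖w‖ ^ 2)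
      (cocompact (EuclideanSpace ℝ (Fin K))) atTop)
    (hF6 : ∀ w z, ⟪f w, z⟫ = ⟪f z, w⟫ → 0 < ⟪f w, z⟫ →
      F w - F z ≤ (⟪f w, w⟫ ^ 2 - ⟪f w, z⟫ ^ 2) / (2 * ⟪f w, w⟫))
    (u v : EuclideanSpace ℝ (Fin K)) (hu : u ≠ 0) :
    ∀ t : ℝ, 0 ≤ t →
      ⟪f u, ((t ^ 2 - 1) / 2) • u + t • v⟫ + F u - F (t • u + v) ≤ 0 :=
  stmt12_general F f hgrad hF4 hF5 hF6 u v hu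
end

section
/- Let X = X⁺ ⊕ X̃ be a Hilbert space decomposition, J : X → ℝ with J(u) = ½‖u⁺‖² − I(u) where I(u) = ½‖ũ‖² + Ψ(u), Ψ : X → ℝ of class C¹. Assume the pointwise inequality of Lemma 3.2 holds for Ψ, namely Ψ'(u)((t²−1)/2 u + tv) + Ψ(u) − Ψ(tu + v) ≤ 0 for all u ∈ X, v ∈ X̃, t ≥ 0. Then for all u ∈ X, v ∈ X̃, t ≥ 0: J(u) ≥ J(tu + v) − J'(u)((t²−1)/2 · u + t v). -/
/-!
Split `J = q − Ψ` with `q(x) = ½‖x⁺‖² − ½‖x̃‖²`. For `v ∈ X̃` the second-order expansion of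
the quadratic part is exact: `q(tu+v) − q(u) − q'(u)((t²−1)/2 u + tv) = −½‖v‖² ≤ 0`, so the
claimed inequality for `J` reduces to the assumed one for `Ψ`.
-/

open scoped RealInnerProductSpace

section IndefiniteQuadratic

variable {X Y Z : Type*} [NormedAddCommGroup X] [InnerProductSpace ℝ X]
  [NormedAddCommGroup Y] [InnerProductSpace ℝ Y] [NormedAddCommGroup Z] [InnerProductSpace ℝ Z]

noncomputable def indefiniteQuadratic (A : X →L[ℝ] Y) (B : X →L[ℝ] Z) (x : X) : ℝ :=
  (1/2) * ‖A x‖ ^ 2 - (1/2) * ‖B x‖ ^ 2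

theorem hasFDerivAt_indefiniteQuadratic (A : X →L[ℝ] Y) (B : X →L[ℝ] Z) (u : X) :
    HasFDerivAt (indefiniteQuadratic A B)
      ((innerSL ℝ (A u)).comp A - (innerSL ℝ (B u)).comp B) u := by
  have hA := (A.hasFDerivAt (x := u)).norm_sq.const_mul (1/2 : ℝ)
  have hB := (B.hasFDerivAt (x := u)).norm_sq.const_mul (1/2 : ℝ)
  refine (hA.sub hB).congr_fderiv ?_
  ext w
  simp

theorem indefiniteQuadratic_smul_add_sub {A : X →L[ℝ] Y} (B : X →L[ℝ] Z) {v : X}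
    (hv : A v = 0) (u : X) (t : ℝ) :
    indefiniteQuadratic A B (t • u + v) - indefiniteQuadratic A B u
      - ((innerSL ℝ (A u)).comp A - (innerSL ℝ (B u)).comp B) (((t ^ 2 - 1) / 2) • u + t • v)
      = -(1/2) * ‖B v‖ ^ 2 := by
  simp only [indefiniteQuadratic, sub_apply, ContinuousLinearMap.comp_apply,
    innerSL_apply_apply, map_add, map_smul, hv, add_zero, inner_zero_right, norm_smul, mul_pow,
    Real.norm_eq_abs, sq_abs, norm_add_sq_real, real_inner_smul_left, real_inner_self_eq_norm_sq]
  ring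

end IndefiniteQuadratic

theorem stmt13_general {X : Type*} [NormedAddCommGroup X] [InnerProductSpace ℝ X]
    (Pp Pt : X →L[ℝ] X)
    (hPpt : ∀ u, Pp (Pt u) = 0)
    (Ψ : X → ℝ) (Ψ' : X → X →L[ℝ] ℝ) (hΨ : ∀ u, HasFDerivAt Ψ (Ψ' u) u)
    (J : X → ℝ) (hJ : ∀ u, J u = (1/2) * ‖Pp u‖ ^ 2 - (1/2) * ‖Pt u‖ ^ 2 - Ψ u)
    (J' : X → X →L[ℝ] ℝ) (hJ' : ∀ u, HasFDerivAt J (J' u) u)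
    (hkey : ∀ (u v : X) (t : ℝ), Pt v = v → 0 ≤ t →
      Ψ' u (((t ^ 2 - 1) / 2) • u + t • v) + Ψ u - Ψ (t • u + v) ≤ 0) :
    ∀ (u v : X) (t : ℝ), Pt v = v → 0 ≤ t →
      J (t • u + v) - J' u (((t ^ 2 - 1) / 2) • u + t • v) ≤ J u := by
  intro u v t hv ht
  have hJq : J = indefiniteQuadratic Pp Pt - Ψ := funext hJ
  have hJ'u : J' u = (innerSL ℝ (Pp u)).comp Pp - (innerSL ℝ (Pt u)).comp Pt - Ψ' u :=
    (hJ' u).unique (hJq ▸ (hasFDerivAt_indefiniteQuadratic Pp Pt u).sub (hΨ u))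
  have hPpv : Pp v = 0 := hv ▸ hPpt v
  have hq := indefiniteQuadratic_smul_add_sub Pt hPpv u t
  have hΨkey := hkey u v t hv ht
  rw [hJq, hJ'u]
  simp only [Pi.sub_apply, sub_apply] at hq ⊢
  linarith [sq_nonneg ‖Pt v‖]

/-- If `J(u) = ½‖u⁺‖² − ½‖ũ‖² − Ψ(u)` and `Ψ` satisfies the pointwise
inequality of Lemma 3.2, then `J(u) ≥ J(tu+v) − J'(u)((t²−1)/2·u + tv)` for all
`u ∈ X`, `v ∈ X̃`, `t ≥ 0`. -/
theorem stmt13 {X : Type*} [NormedAddCommGroup X] [InnerProductSpace ℝ X] [CompleteSpace X]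
    (Pp Pt : X →L[ℝ] X)
    (hsum : ∀ u, Pp u + Pt u = u)
    (horth : ∀ u v, ⟪Pp u, Pt v⟫ = 0)
    (hPpt : ∀ u, Pp (Pt u) = 0) (hPtp : ∀ u, Pt (Pp u) = 0)
    (Ψ : X → ℝ) (Ψ' : X → X →L[ℝ] ℝ) (hΨ : ∀ u, HasFDerivAt Ψ (Ψ' u) u)
    (J : X → ℝ) (hJ : ∀ u, J u = (1/2) * ‖Pp u‖ ^ 2 - (1/2) * ‖Pt u‖ ^ 2 - Ψ u)
    (J' : X → X →L[ℝ] ℝ) (hJ' : ∀ u, HasFDerivAt J (J' u) u)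
    (hkey : ∀ (u v : X) (t : ℝ), Pt v = v → 0 ≤ t →
      Ψ' u (((t ^ 2 - 1) / 2) • u + t • v) + Ψ u - Ψ (t • u + v) ≤ 0) :
    ∀ (u v : X) (t : ℝ), Pt v = v → 0 ≤ t →
      J (t • u + v) - J' u (((t ^ 2 - 1) / 2) • u + t • v) ≤ J u :=
  stmt13_general Pp Pt hPpt Ψ Ψ' hΨ J hJ J' hJ' hkey
end
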